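/- Fix m ∈ ℕ and let Γ be the set of m × m matrices S over ℕ with zero diagonal whose every row sum equals the corresponding column sum. Let χ be a complex-valued function on m × m matrices over ℕ satisfying χ(S + T) = χ(S)·χ(T) for all S, T ∈ Γ and χ(Sᵀ) = conj(χ(S)) for all S ∈ Γ. Suppose a ≠ b in Fin m and χ(E_{ab} + E_{ba}) = 0. Then for every p ≥ 2 and every injective l : Fin p → Fin m with l(0) = a and l(1) = b, the cycle matrix σ = E_{l(0) l(1)} + E_{l(1) l(2)} + … + E_{l(p−1) l(0)} satisfies χ(σ) = 0. -/

import Mathlib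

/-!
Write `σ` for the cycle matrix. Multiplicativity and `χ(Sᵀ) = conj χ(S)` give
`χ(σ + σᵀ) = χ(σ) · conj χ(σ) = |χ(σ)|²`. On the other hand `σ + σᵀ` is the sum over the
edges of the cycle of the symmetric matrices `E_{l(i) l(i+1)} + E_{l(i+1) l(i)}`, all in `Γ`,
and the one for `i = 0` is `E_{ab} + E_{ba}`; so multiplicativity gives `χ(σ + σᵀ) = 0`.
-/

/-- The semigroup `Γ` of `m × m` matrices over `ℕ` with zero diagonal whose row sums
equal the corresponding column sums. -/
def InGamma {m : ℕ} (S : Matrix (Fin m) (Fin m) ℕ) : Prop :=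
  (∀ i, S i i = 0) ∧ ∀ μ, ∑ ν, S μ ν = ∑ ν, S ν μ

open Matrix Finset

namespace InGamma

variable {m : ℕ}

lemma zero : InGamma (0 : Matrix (Fin m) (Fin m) ℕ) := by
  constructor <;> simp

lemma add {S T : Matrix (Fin m) (Fin m) ℕ} (hS : InGamma S) (hT : InGamma T) :
    InGamma (S + T) :=
  ⟨fun i => by simp [hS.1 i, hT.1 i],
    fun μ => by simp only [Matrix.add_apply, sum_add_distrib, hS.2 μ, hT.2 μ]⟩

lemma transpose {S : Matrix (Fin m) (Fin m) ℕ} (hS : InGamma S) : InGamma Sᵀ :=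
  ⟨hS.1, fun μ => (hS.2 μ).symm⟩

lemma sum {ι : Type*} {s : Finset ι} {F : ι → Matrix (Fin m) (Fin m) ℕ}
    (hF : ∀ i ∈ s, InGamma (F i)) : InGamma (∑ i ∈ s, F i) := by
  classical
  induction s using Finset.induction with
  | empty => simpa using zero
  | insert x t hx ih =>
    rw [sum_insert hx]
    exact (hF x (mem_insert_self x t)).add (ih fun i hi => hF i (mem_insert_of_mem hi))

lemma sum_single_perm {ι : Type*} [Fintype ι] (l : ι → Fin m) (π : Equiv.Perm ι)
    (hl : ∀ i, l i ≠ l (π i)) : InGamma (∑ i, single (l i) (l (π i)) 1) := by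
  refine ⟨fun j => ?_, fun μ => ?_⟩
  · simp only [Matrix.sum_apply]
    exact Finset.sum_eq_zero fun i _ =>
      single_apply_of_ne _ _ _ _ _ fun h => hl i (h.1.trans h.2.symm)
  · simp only [Matrix.sum_apply, single_apply]
    rw [Finset.sum_comm, Finset.sum_comm (γ := Fin m)]
    simp only [ite_and, Finset.sum_ite_eq, Finset.sum_ite_irrel, mem_univ, if_true,
      Finset.sum_const_zero]
    exact (Equiv.sum_comp π fun i => if l i = μ then 1 else 0).symm

lemma single_add_single {a b : Fin m} (hab : a ≠ b) :
    InGamma (single a b 1 + single b a 1) := by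
  have hswap : ∀ i, ![a, b] i ≠ ![a, b] (Equiv.swap 0 1 i) := by
    simpa [Fin.forall_fin_two] using ⟨hab, hab.symm⟩
  simpa [Fin.sum_univ_two] using sum_single_perm ![a, b] (Equiv.swap 0 1) hswap

end InGamma

lemma Matrix.sum_single_add_transpose {m ι α : Type*} [DecidableEq m] [AddCommMonoid α]
    (s : Finset ι) (r c : ι → m) (x : α) :
    (∑ i ∈ s, single (r i) (c i) x) + (∑ i ∈ s, single (r i) (c i) x)ᵀ =
      ∑ i ∈ s, (single (r i) (c i) x + single (c i) (r i) x) := by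
  simp [transpose_sum, Finset.sum_add_distrib]

section Character

variable {m : ℕ} {χ : Matrix (Fin m) (Fin m) ℕ → ℂ}

lemma map_sum_eq_zero_of_map_eq_zero
    (hmul : ∀ S T, InGamma S → InGamma T → χ (S + T) = χ S * χ T)
    {ι : Type*} [DecidableEq ι] {s : Finset ι} {F : ι → Matrix (Fin m) (Fin m) ℕ}
    (hF : ∀ i ∈ s, InGamma (F i)) {i : ι} (hi : i ∈ s) (h0 : χ (F i) = 0) :
    χ (∑ j ∈ s, F j) = 0 := by
  rw [← Finset.add_sum_erase s F hi,
    hmul _ _ (hF i hi) (InGamma.sum fun j hj => hF j (Finset.mem_of_mem_erase hj)), h0,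
    zero_mul]

lemma map_add_transpose_eq_normSq
    (hmul : ∀ S T, InGamma S → InGamma T → χ (S + T) = χ S * χ T)
    (hstar : ∀ S, InGamma S → χ Sᵀ = starRingEnd ℂ (χ S))
    {S : Matrix (Fin m) (Fin m) ℕ} (hS : InGamma S) :
    χ (S + Sᵀ) = Complex.normSq (χ S) := by
  rw [hmul _ _ hS hS.transpose, hstar _ hS, Complex.mul_conj]

end Character

theorem chi_vanishes_on_cycles_through_zero_edge {m : ℕ}
    (χ : Matrix (Fin m) (Fin m) ℕ → ℂ)
    (hmul : ∀ S T : Matrix (Fin m) (Fin m) ℕ, InGamma S → InGamma T →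
      χ (S + T) = χ S * χ T)
    (hstar : ∀ S : Matrix (Fin m) (Fin m) ℕ, InGamma S → χ (Matrix.transpose S) = starRingEnd ℂ (χ S))
    (a b : Fin m)
    (hzero : χ (Matrix.single a b 1 + Matrix.single b a 1) = 0)
    (p : ℕ) (hp : 2 ≤ p) (l : Fin p → Fin m) (hl : Function.Injective l)
    (hla : l ⟨0, by omega⟩ = a) (hlb : l ⟨1, by omega⟩ = b) :
    χ (∑ i : Fin p, Matrix.single (l i) (l (i + ⟨1, by omega⟩)) 1) = 0 := by
  have : NeZero p := ⟨by omega⟩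
  set next := Equiv.addRight (⟨1, by omega⟩ : Fin p)
  have hnext : ∀ i, l i ≠ l (next i) := fun i h => by
    simpa [Fin.ext_iff] using left_eq_add.mp (hl h)
  set σ := ∑ i, single (l i) (l (next i)) 1
  have hσ : InGamma σ := InGamma.sum_single_perm l next hnext
  have hsymm : χ (σ + σᵀ) = 0 := by
    rw [sum_single_add_transpose]
    refine map_sum_eq_zero_of_map_eq_zero hmul
      (fun i _ => InGamma.single_add_single (hnext i)) (mem_univ ⟨0, by omega⟩) ?_
    have hstart : next ⟨0, by omega⟩ = ⟨1, by omega⟩ := zero_add _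
    rwa [hstart, hla, hlb]
  rw [map_add_transpose_eq_normSq hmul hstar hσ] at hsymm
  exact Complex.normSq_eq_zero.mp (mod_cast hsymm)
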